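/- arXiv:2308.05204 — 10 statements merged into one kernel-verified Lean document; each statement's English description precedes it below -/
import Mathlib

section
/- If b ≥ 1 and the graph G has at least one vertex or edge, then the 1-DCNDP polytope P₁ is full-dimensional; that is, the affine span of P₁ is all of ℝ^E × ℝ^V (equivalently, P₁ has affine dimension m + n). -/
open Finset

/-- The 1-DCNDP polytope `P₁ ⊆ ℝ^E × ℝ^V`: all pairs `(x, y)` with `x_e ≥ 0` for every edge
`e`, `0 ≤ y_v ≤ 1` for every vertex `v`, `1 - y_u - y_v ≤ x_{uv}` for every edge `{u,v}`, and
`∑_{v ∈ V} y_v ≤ b`. -/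
def dcndpP1 {V : Type*} [Fintype V] [DecidableEq V] (G : SimpleGraph V) [DecidableRel G.Adj]
    (b : ℝ) : Set ((G.edgeSet → ℝ) × (V → ℝ)) :=
  {p | (∀ e, 0 ≤ p.1 e) ∧ (∀ v, 0 ≤ p.2 v ∧ p.2 v ≤ 1) ∧
    (∀ u v, ∀ h : G.Adj u v, 1 - p.2 u - p.2 v ≤ p.1 ⟨s(u, v), h⟩) ∧
    (∑ v, p.2 v ≤ b)}

/-- If `b ≥ 1` and the graph has at least one vertex or edge, then the 1-DCNDP polytope `P₁`
is full-dimensional: its affine span is all of `ℝ^E × ℝ^V`. -/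
theorem dcndpP1_fullDimensional {V : Type*} [Fintype V] [DecidableEq V] (G : SimpleGraph V)
    [DecidableRel G.Adj] (b : ℝ) (hb : 1 ≤ b)
    (hne : Nonempty V ∨ Nonempty G.edgeSet) :
    affineSpan ℝ (dcndpP1 G b) = ⊤ := by
  classical
  set S := dcndpP1 G b with hS
  have hb0 : (0:ℝ) ≤ b := le_trans zero_le_one hb
  -- base point
  have hp0 : ((fun _ => (2:ℝ)), (fun _ => (0:ℝ))) ∈ S := by
    refine ⟨fun e => by norm_num, fun v => by norm_num, fun u v h => by norm_num, ?_⟩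
    simp [hb0]
  -- edge perturbations
  have hpE : ∀ e : G.edgeSet,
      ((fun e' => if e' = e then (3:ℝ) else 2), (fun _ => (0:ℝ))) ∈ S := by
    intro e
    refine ⟨fun e' => ?_, fun v => by norm_num,
      fun u v h => ?_, by simp [hb0]⟩
    · dsimp only; split <;> norm_num
    · dsimp only; split <;> norm_num
  -- vertex perturbations
  have hpV : ∀ v : V, ((fun _ => (2:ℝ)), (Pi.single v (1:ℝ))) ∈ S := by
    intro v
    refine ⟨fun e => by norm_num, fun w => ?_, fun u w h => ?_, ?_⟩
    · rcases eq_or_ne w v with rfl | hw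
      · simp
      · simp [Pi.single_apply, hw]
    · have h1 : (Pi.single v 1 : V → ℝ) u ≥ 0 := by
        rcases eq_or_ne u v with rfl | hu <;> simp [Pi.single_apply, *]
      have h2 : (Pi.single v 1 : V → ℝ) w ≥ 0 := by
        rcases eq_or_ne w v with rfl | hw <;> simp [Pi.single_apply, *]
      dsimp only
      linarith
    · rw [Finset.sum_eq_single v]
      · simpa using hb
      · intro w _ hw; simp [Pi.single_apply, hw]
      · intro h; exact absurd (Finset.mem_univ v) h
  have hne' : S.Nonempty := ⟨_, hp0⟩
  rw [AffineSubspace.affineSpan_eq_top_iff_vectorSpan_eq_top_of_nonempty ℝ ((G.edgeSet → ℝ) × (V → ℝ)) ((G.edgeSet → ℝ) × (V → ℝ)) hne']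
  rw [eq_top_iff]
  intro p _
  -- basis directions are in the vector span
  have hedir : ∀ e : G.edgeSet, ((Pi.single e (1:ℝ), (0 : V → ℝ)) :
      (G.edgeSet → ℝ) × (V → ℝ)) ∈ vectorSpan ℝ S := by
    intro e
    have := vsub_mem_vectorSpan ℝ (hpE e) hp0
    convert this using 1
    ext e'
    · by_cases h : e' = e <;> simp [Pi.single_apply, h] <;> norm_num
    · simp
  have hvdir : ∀ v : V, (((0 : G.edgeSet → ℝ), Pi.single v (1:ℝ)) :
      (G.edgeSet → ℝ) × (V → ℝ)) ∈ vectorSpan ℝ S := by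
    intro v
    have := vsub_mem_vectorSpan ℝ (hpV v) hp0
    convert this using 1
    ext e'
    · simp
    · simp
  -- decompose p
  have hdecomp : p = (∑ e : G.edgeSet, p.1 e • ((Pi.single e (1:ℝ), (0 : V → ℝ)) :
      (G.edgeSet → ℝ) × (V → ℝ))) + ∑ v : V, p.2 v • (((0 : G.edgeSet → ℝ),
      Pi.single v (1:ℝ)) : (G.edgeSet → ℝ) × (V → ℝ)) := by
    ext i
    · simp only [Prod.fst_add, Prod.fst_sum, Prod.smul_fst, Prod.snd_sum, smul_zero,
        Finset.sum_apply, Pi.add_apply, Pi.smul_apply, smul_eq_mul]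
      rw [Finset.sum_eq_single i]
      · simp
      · intro w _ hw; simp [Pi.single_apply, hw.symm]
      · intro h; exact absurd (Finset.mem_univ i) h
    · simp only [Prod.snd_add, Prod.snd_sum, Prod.smul_snd, Prod.fst_sum, smul_zero,
        Finset.sum_apply, Pi.add_apply, Pi.smul_apply, smul_eq_mul]
      rw [Finset.sum_eq_single i]
      · simp
      · intro w _ hw; simp [Pi.single_apply, hw.symm]
      · intro h; exact absurd (Finset.mem_univ i) h
    
  rw [hdecomp]
  exact Submodule.add_mem _
    (Submodule.sum_mem _ fun e _ => Submodule.smul_mem _ _ (hedir e))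
    (Submodule.sum_mem _ fun v _ => Submodule.smul_mem _ _ (hvdir v))
end

section
/- If b ≥ 2, then for every edge {u,v} ∈ E the nonnegativity inequality x_{uv} ≥ 0 is facet-defining for the 1-DCNDP polytope P₁; that is, the face F = {(x, y) ∈ P₁ : x_{uv} = 0} has affine dimension exactly m + n − 1. -/
open Finset

/-- If `b ≥ 2`, then for every edge `{u,v} ∈ E` the nonnegativity inequality `x_{uv} ≥ 0` is
facet-defining for `P₁`: the face where `x_{uv} = 0` has affine dimension exactly `m + n - 1`. -/
theorem dcndpP1_facet_x_nonneg {V : Type*} [Fintype V] [DecidableEq V] (G : SimpleGraph V)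
    [DecidableRel G.Adj] (b : ℝ) (hb : 2 ≤ b) (u v : V) (h : G.Adj u v) :
    Module.finrank ℝ
        (affineSpan ℝ {p ∈ dcndpP1 G b | p.1 ⟨s(u, v), h⟩ = 0}).direction =
      Fintype.card G.edgeSet + Fintype.card V - 1 := by
  classical
  have huv : u ≠ v := h.ne
  set e₀ : G.edgeSet := ⟨s(u, v), h⟩ with he₀def
  set S : Set ((G.edgeSet → ℝ) × (V → ℝ)) :=
    {p ∈ dcndpP1 G b | p.1 e₀ = 0} with hSdef
  -- generic membership lemma
  have hmem : ∀ (g : G.edgeSet → ℝ) (f : V → ℝ),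
      g e₀ = 0 → (∀ e, e ≠ e₀ → 1 ≤ g e) → (∀ w, f w = 0 ∨ f w = 1) →
      (f u = 1 ∨ f v = 1) → (∑ w, f w ≤ 2) → (g, f) ∈ S := by
    intro g f hg0 hg1 hf hfuv hsum
    have h0 : ∀ w, (0:ℝ) ≤ f w := by
      intro w; rcases hf w with h' | h' <;> rw [h'] <;> norm_num
    refine ⟨⟨?_, ?_, ?_, ?_⟩, hg0⟩
    · intro e
      show 0 ≤ g e
      by_cases he : e = e₀
      · rw [he, hg0]
      · linarith [hg1 e he]
    · intro w
      show 0 ≤ f w ∧ f w ≤ 1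
      rcases hf w with h' | h' <;> rw [h'] <;> norm_num
    · intro a c hac
      show 1 - f a - f c ≤ g ⟨s(a, c), hac⟩
      by_cases hE : (⟨s(a, c), hac⟩ : G.edgeSet) = e₀
      · have hs : s(a, c) = s(u, v) := congrArg Subtype.val hE
        have hcases := Sym2.eq_iff.mp hs
        have hge : (1 : ℝ) ≤ f a + f c := by
          rcases hcases with ⟨ha, hc⟩ | ⟨ha, hc⟩ <;> rw [ha, hc] <;>
            rcases hfuv with h1 | h1 <;> linarith [h0 u, h0 v]
        rw [show (⟨s(a, c), hac⟩ : G.edgeSet) = e₀ from hE, hg0]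
        linarith
      · have := hg1 _ hE
        linarith [h0 a, h0 c]
    · show ∑ w, f w ≤ b
      linarith
  -- the points
  have hA : ((fun e => if e = e₀ then (0:ℝ) else 1),
      (fun a => if a = u then (1:ℝ) else 0)) ∈ S := by
    apply hmem
    · simp
    · intro e he; rw [if_neg he]
    · intro w; split_ifs <;> simp
    · left; simp
    · have : (∑ a : V, if a = u then (1:ℝ) else 0) = 1 := by simp
      linarith
  have hD : ((fun e => if e = e₀ then (0:ℝ) else 1),
      (fun a => if a = v then (1:ℝ) else 0)) ∈ S := by
    apply hmem
    · simp
    · intro e he; rw [if_neg he]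
    · intro w; split_ifs <;> simp
    · right; simp
    · have : (∑ a : V, if a = v then (1:ℝ) else 0) = 1 := by simp
      linarith
  have hB : ∀ e' : G.edgeSet, e' ≠ e₀ →
      ((fun e => if e = e₀ then (0:ℝ) else if e = e' then 2 else 1),
        (fun a => if a = u then (1:ℝ) else 0)) ∈ S := by
    intro e' he'
    apply hmem
    · simp
    · intro e he; rw [if_neg he]; split_ifs <;> norm_num
    · intro w; split_ifs <;> simp
    · left; simp
    · have : (∑ a : V, if a = u then (1:ℝ) else 0) = 1 := by simp
      linarith
  have hC : ∀ w : V, w ≠ u →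
      ((fun e => if e = e₀ then (0:ℝ) else 1),
        (fun a => (if a = u then (1:ℝ) else 0) + (if a = w then (1:ℝ) else 0))) ∈ S := by
    intro w hw
    apply hmem
    · simp
    · intro e he; rw [if_neg he]
    · intro a; split_ifs with h1 h2
      · exact absurd (h1.symm.trans h2) (Ne.symm hw)
      · right; norm_num
      · right; norm_num
      · left; norm_num
    · left; rw [if_pos rfl, if_neg (Ne.symm hw)]; norm_num
    · rw [Finset.sum_add_distrib]
      have h1 : (∑ a : V, if a = u then (1:ℝ) else 0) = 1 := by simp
      have h2 : (∑ a : V, if a = w then (1:ℝ) else 0) = 1 := by simp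
      linarith
  -- direction membership of basis vectors
  have hxdir : ∀ e' : G.edgeSet, e' ≠ e₀ →
      (((fun e => if e = e' then (1:ℝ) else 0), (0 : V → ℝ)) :
        (G.edgeSet → ℝ) × (V → ℝ)) ∈ (affineSpan ℝ S).direction := by
    intro e' he'
    have key := AffineSubspace.vsub_mem_direction
      (subset_affineSpan ℝ S (hB e' he')) (subset_affineSpan ℝ S hA)
    have heq : (((fun e => if e = e₀ then (0:ℝ) else if e = e' then 2 else 1),
          (fun a => if a = u then (1:ℝ) else 0)) : (G.edgeSet → ℝ) × (V → ℝ)) -ᵥ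
        ((fun e => if e = e₀ then (0:ℝ) else 1), (fun a => if a = u then (1:ℝ) else 0)) =
        (((fun e => if e = e' then (1:ℝ) else 0), (0 : V → ℝ))) := by
      rw [vsub_eq_sub]
      refine Prod.ext (funext fun e => ?_) (funext fun a => ?_)
      · show (if e = e₀ then (0:ℝ) else if e = e' then 2 else 1) -
            (if e = e₀ then (0:ℝ) else 1) = (if e = e' then (1:ℝ) else 0)
        by_cases h1 : e = e₀
        · rw [if_pos h1, if_pos h1, if_neg (fun hc : e = e' => he' (hc.symm.trans h1))]
          norm_num
        · rw [if_neg h1, if_neg h1]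
          split_ifs <;> norm_num
      · show (if a = u then (1:ℝ) else 0) - (if a = u then (1:ℝ) else 0) = (0:ℝ)
        simp
    rwa [heq] at key
  have hydir : ∀ w : V,
      (((0 : G.edgeSet → ℝ), (fun a => if a = w then (1:ℝ) else 0)) :
        (G.edgeSet → ℝ) × (V → ℝ)) ∈ (affineSpan ℝ S).direction := by
    intro w
    by_cases hw : w = u
    · rw [hw]
      have key := AffineSubspace.vsub_mem_direction
        (subset_affineSpan ℝ S (hC v (Ne.symm huv))) (subset_affineSpan ℝ S hD)
      have heq : (((fun e => if e = e₀ then (0:ℝ) else 1),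
            (fun a => (if a = u then (1:ℝ) else 0) + (if a = v then (1:ℝ) else 0))) :
            (G.edgeSet → ℝ) × (V → ℝ)) -ᵥ
          ((fun e => if e = e₀ then (0:ℝ) else 1), (fun a => if a = v then (1:ℝ) else 0)) =
          (((0 : G.edgeSet → ℝ), (fun a => if a = u then (1:ℝ) else 0))) := by
        rw [vsub_eq_sub]
        refine Prod.ext (funext fun e => ?_) (funext fun a => ?_)
        · show (if e = e₀ then (0:ℝ) else 1) - (if e = e₀ then (0:ℝ) else 1) = (0:ℝ)
          simp
        · show ((if a = u then (1:ℝ) else 0) + (if a = v then (1:ℝ) else 0)) -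
            (if a = v then (1:ℝ) else 0) = (if a = u then (1:ℝ) else 0)
          ring
      rwa [heq] at key
    · have key := AffineSubspace.vsub_mem_direction
        (subset_affineSpan ℝ S (hC w hw)) (subset_affineSpan ℝ S hA)
      have heq : (((fun e => if e = e₀ then (0:ℝ) else 1),
            (fun a => (if a = u then (1:ℝ) else 0) + (if a = w then (1:ℝ) else 0))) :
            (G.edgeSet → ℝ) × (V → ℝ)) -ᵥ
          ((fun e => if e = e₀ then (0:ℝ) else 1), (fun a => if a = u then (1:ℝ) else 0)) =
          (((0 : G.edgeSet → ℝ), (fun a => if a = w then (1:ℝ) else 0))) := by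
        rw [vsub_eq_sub]
        refine Prod.ext (funext fun e => ?_) (funext fun a => ?_)
        · show (if e = e₀ then (0:ℝ) else 1) - (if e = e₀ then (0:ℝ) else 1) = (0:ℝ)
          simp
        · show ((if a = u then (1:ℝ) else 0) + (if a = w then (1:ℝ) else 0)) -
            (if a = u then (1:ℝ) else 0) = (if a = w then (1:ℝ) else 0)
          ring
      rwa [heq] at key
  -- the linear functional
  set fL : ((G.edgeSet → ℝ) × (V → ℝ)) →ₗ[ℝ] ℝ :=
    (LinearMap.proj e₀).comp (LinearMap.fst ℝ (G.edgeSet → ℝ) (V → ℝ)) with hfLdef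
  have hfLapp : ∀ p : (G.edgeSet → ℝ) × (V → ℝ), fL p = p.1 e₀ := fun p => rfl
  -- K ≤ direction
  have hKle : ∀ q : (G.edgeSet → ℝ) × (V → ℝ), q.1 e₀ = 0 →
      q ∈ (affineSpan ℝ S).direction := by
    intro q hq
    have hq_eq : q =
        (∑ e : G.edgeSet, q.1 e •
          (((fun e' => if e' = e then (1:ℝ) else 0), (0 : V → ℝ)) :
            (G.edgeSet → ℝ) × (V → ℝ))) +
        ∑ w : V, q.2 w •
          (((0 : G.edgeSet → ℝ), (fun a => if a = w then (1:ℝ) else 0)) :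
            (G.edgeSet → ℝ) × (V → ℝ)) := by
      refine Prod.ext (funext fun x => ?_) (funext fun a => ?_)
      · simp only [Prod.fst_add, Prod.fst_sum, Finset.sum_apply, Pi.add_apply,
          Pi.smul_apply, smul_eq_mul, mul_ite, mul_one, mul_zero, Prod.smul_mk,
          Pi.zero_apply, smul_zero, Finset.sum_const_zero, add_zero]
        rw [Finset.sum_ite_eq]
        simp
      · simp only [Prod.snd_add, Prod.snd_sum, Finset.sum_apply, Pi.add_apply,
          Pi.smul_apply, smul_eq_mul, mul_ite, mul_one, mul_zero, Prod.smul_mk,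
          Pi.zero_apply, smul_zero, Finset.sum_const_zero, zero_add]
        rw [Finset.sum_ite_eq]
        simp
    rw [hq_eq]
    apply Submodule.add_mem
    · apply Submodule.sum_mem
      intro e _
      by_cases he : e = e₀
      · subst he
        rw [hq, zero_smul]
        exact Submodule.zero_mem _
      · exact Submodule.smul_mem _ _ (hxdir e he)
    · exact Submodule.sum_mem _ fun w _ => Submodule.smul_mem _ _ (hydir w)
  -- direction = ker fL
  have hdir : (affineSpan ℝ S).direction = LinearMap.ker fL := by
    apply le_antisymm
    · have hsub : S ⊆ (AffineSubspace.mk' (0 : (G.edgeSet → ℝ) × (V → ℝ))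
          (LinearMap.ker fL) : AffineSubspace ℝ _) := by
        intro p hp
        show p ∈ AffineSubspace.mk' (0 : (G.edgeSet → ℝ) × (V → ℝ)) (LinearMap.ker fL)
        refine AffineSubspace.mem_mk'.mpr ?_
        simp only [vsub_eq_sub, sub_zero, LinearMap.mem_ker, hfLapp]
        exact hp.2
      have hle := AffineSubspace.direction_le (affineSpan_le.mpr hsub)
      rwa [AffineSubspace.direction_mk'] at hle
    · intro q hq
      exact hKle q (by simpa [hfLapp] using hq)
  rw [hdir]
  have hsurj : Function.Surjective fL := by
    intro c
    exact ⟨(Pi.single e₀ c, 0), by simp [hfLapp]⟩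
  have hrk := LinearMap.finrank_range_add_finrank_ker fL
  rw [LinearMap.range_eq_top.mpr hsurj, finrank_top] at hrk
  have hM : Module.finrank ℝ ((G.edgeSet → ℝ) × (V → ℝ)) =
      Fintype.card G.edgeSet + Fintype.card V := by
    rw [Module.finrank_prod, Module.finrank_fintype_fun_eq_card,
      Module.finrank_fintype_fun_eq_card]
  rw [hM, Module.finrank_self] at hrk
  omega
end

section
/- If b ≥ 1, then for every vertex v ∈ V the nonnegativity inequality y_v ≥ 0 is facet-defining for the 1-DCNDP polytope P₁; that is, the face F = {(x, y) ∈ P₁ : y_v = 0} has affine dimension exactly m + n − 1. -/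
open Finset

/-- If `b ≥ 1`, then for every vertex `v ∈ V` the nonnegativity inequality `y_v ≥ 0` is
facet-defining for `P₁`: the face where `y_v = 0` has affine dimension exactly `m + n - 1`. -/
theorem dcndpP1_facet_y_nonneg {V : Type*} [Fintype V] [DecidableEq V] (G : SimpleGraph V)
    [DecidableRel G.Adj] (b : ℝ) (hb : 1 ≤ b) (v : V) :
    Module.finrank ℝ
        (affineSpan ℝ {p ∈ dcndpP1 G b | p.2 v = 0}).direction =
      Fintype.card G.edgeSet + Fintype.card V - 1 := by
  classical
  set S : Set ((G.edgeSet → ℝ) × (V → ℝ)) := {p ∈ dcndpP1 G b | p.2 v = 0} with hSdef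
  have hb0 : (0:ℝ) ≤ b := le_trans zero_le_one hb
  -- the evaluation functional
  set f : ((G.edgeSet → ℝ) × (V → ℝ)) →ₗ[ℝ] ℝ :=
    (LinearMap.proj v).comp (LinearMap.snd ℝ (G.edgeSet → ℝ) (V → ℝ)) with hf
  have hfapp : ∀ p : (G.edgeSet → ℝ) × (V → ℝ), f p = p.2 v := fun p => rfl
  -- the base point
  set p0 : (G.edgeSet → ℝ) × (V → ℝ) := (fun _ => 1, 0) with hp0def
  have hp0 : p0 ∈ S := by
    refine ⟨⟨fun e => zero_le_one, fun w => ⟨le_refl 0, zero_le_one⟩, ?_, ?_⟩, rfl⟩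
    · intro u w h
      simp [hp0def]
    · simp [hp0def, hb0]
  -- edge-direction generators
  have hgen1 : ∀ e : G.edgeSet,
      ((Pi.single e 1, 0) : (G.edgeSet → ℝ) × (V → ℝ)) ∈ vectorSpan ℝ S := by
    intro e
    have hmem : p0 + (Pi.single e 1, 0) ∈ S := by
      refine ⟨⟨fun e' => ?_, fun w => ⟨by simp [hp0def], by simp [hp0def]⟩, ?_, ?_⟩, by simp [hp0def]⟩
      · have : (0:ℝ) ≤ (Pi.single e (1:ℝ) : G.edgeSet → ℝ) e' := by
          rcases eq_or_ne e' e with h | h <;> simp [h, Pi.single_apply]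
        simpa [hp0def] using add_nonneg zero_le_one this
      · intro u w h
        have : (0:ℝ) ≤ (Pi.single e (1:ℝ) : G.edgeSet → ℝ) ⟨s(u, w), h⟩ := by
          rcases eq_or_ne (⟨s(u, w), h⟩ : G.edgeSet) e with h' | h' <;>
            simp [h', Pi.single_apply]
        simp only [hp0def, Prod.fst_add, Prod.snd_add, Pi.add_apply, Pi.zero_apply]
        linarith
      · simp [hp0def, hb0]
    have := vsub_mem_vectorSpan ℝ hmem hp0
    simpa using this
  -- vertex-direction generators (w ≠ v)
  have hgen2 : ∀ w : V, w ≠ v →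
      (((0 : G.edgeSet → ℝ), Pi.single w 1) : (G.edgeSet → ℝ) × (V → ℝ)) ∈ vectorSpan ℝ S := by
    intro w hw
    have hmem : p0 + ((0 : G.edgeSet → ℝ), Pi.single w 1) ∈ S := by
      have hsingle : ∀ u : V, (0:ℝ) ≤ (Pi.single w (1:ℝ) : V → ℝ) u ∧ (Pi.single w (1:ℝ) : V → ℝ) u ≤ 1 := by
        intro u
        rcases eq_or_ne u w with h | h <;> simp [h, Pi.single_apply]
      refine ⟨⟨fun e' => by simp [hp0def], fun u => ?_, ?_, ?_⟩, ?_⟩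
      · have := hsingle u
        constructor
        · simpa [hp0def] using this.1
        · simpa [hp0def] using this.2
      · intro u u' h
        have h1 := (hsingle u).1
        have h2 := (hsingle u').1
        simp only [hp0def, Prod.fst_add, Prod.snd_add, Pi.add_apply, Pi.zero_apply]
        linarith
      · have : ∑ u, Pi.single w 1 u = (1:ℝ) := by
          simp [Pi.single_apply]
        simp only [hp0def, Prod.snd_add, Pi.add_apply, Pi.zero_apply]
        rw [Finset.sum_add_distrib]
        simpa [this] using hb
      · simp [hp0def, Pi.single_apply, hw]
    have := vsub_mem_vectorSpan ℝ hmem hp0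
    simpa using this
  -- vectorSpan = ker f
  have hker : vectorSpan ℝ S = LinearMap.ker f := by
    apply le_antisymm
    · rw [vectorSpan_def, Submodule.span_le]
      rintro u ⟨p, hp, q, hq, rfl⟩
      simp only [SetLike.mem_coe, LinearMap.mem_ker, vsub_eq_sub]
      show (p - q).2 v = 0
      simp [Prod.snd_sub, hp.2, hq.2]
    · intro u hu
      have huv : u.2 v = 0 := hu
      have hdecomp : u = (∑ e : G.edgeSet, u.1 e • ((Pi.single e 1, 0) :
            (G.edgeSet → ℝ) × (V → ℝ))) +
          ∑ w : V, u.2 w • (((0 : G.edgeSet → ℝ), Pi.single w 1) :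
            (G.edgeSet → ℝ) × (V → ℝ)) := by
        ext e'
        · simp [Prod.fst_sum, Finset.sum_apply, Pi.single_apply, mul_comm]
        · rename_i w'
          simp [Prod.snd_sum, Finset.sum_apply, Pi.single_apply, mul_comm]
      rw [hdecomp]
      refine Submodule.add_mem _ (Submodule.sum_mem _ fun e _ =>
        Submodule.smul_mem _ _ (hgen1 e)) (Submodule.sum_mem _ fun w _ => ?_)
      rcases eq_or_ne w v with h | h
      · subst h
        rw [huv]
        simp
      · exact Submodule.smul_mem _ _ (hgen2 w h)
  rw [direction_affineSpan, hker]
  -- rank-nullity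
  have hsurj : LinearMap.range f = ⊤ := by
    rw [LinearMap.range_eq_top]
    intro c
    exact ⟨((0 : G.edgeSet → ℝ), Pi.single v c), by simp [hfapp]⟩
  have hrn := f.finrank_range_add_finrank_ker
  rw [hsurj] at hrn
  have htop : Module.finrank ℝ ((G.edgeSet → ℝ) × (V → ℝ)) =
      Fintype.card G.edgeSet + Fintype.card V := by
    simp [Module.finrank_prod]
  have hone : Module.finrank ℝ (⊤ : Submodule ℝ ℝ) = 1 := by
    simp
  rw [hone, htop] at hrn
  have hn : 1 ≤ Fintype.card V := Fintype.card_pos_iff.mpr ⟨v⟩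
  omega
end

section
/- If b ≥ 2, then for every vertex v ∈ V the bound inequality y_v ≤ 1 is facet-defining for the 1-DCNDP polytope P₁; that is, the face F = {(x, y) ∈ P₁ : y_v = 1} has affine dimension exactly m + n − 1. -/
open Finset

/-- If `b ≥ 2`, then for every vertex `v ∈ V` the bound inequality `y_v ≤ 1` is
facet-defining for `P₁`: the face where `y_v = 1` has affine dimension exactly `m + n - 1`. -/
theorem dcndpP1_facet_y_le_one {V : Type*} [Fintype V] [DecidableEq V] (G : SimpleGraph V)
    [DecidableRel G.Adj] (b : ℝ) (hb : 2 ≤ b) (v : V) :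
    Module.finrank ℝ
        (affineSpan ℝ {p ∈ dcndpP1 G b | p.2 v = 1}).direction =
      Fintype.card G.edgeSet + Fintype.card V - 1 := by
  classical
  set S : Set ((G.edgeSet → ℝ) × (V → ℝ)) := {p ∈ dcndpP1 G b | p.2 v = 1} with hS
  -- the linear functional `p ↦ p.2 v`
  let f : ((G.edgeSet → ℝ) × (V → ℝ)) →ₗ[ℝ] ℝ :=
    (LinearMap.proj v).comp (LinearMap.snd ℝ _ _)
  -- base point
  set p₀ : (G.edgeSet → ℝ) × (V → ℝ) :=
    (fun _ => (1:ℝ), fun u => if u = v then 1 else 0) with hp₀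
  have hsumδ : ∑ u : V, (if u = v then (1:ℝ) else 0) = 1 := by
    simp
  have hp₀S : p₀ ∈ S := by
    refine ⟨⟨fun e => by norm_num, fun u => by by_cases h : u = v <;> simp [hp₀, h],
      fun a c _ => ?_, ?_⟩, by simp [hp₀]⟩
    · have ha : (0:ℝ) ≤ if a = v then 1 else 0 := by positivity
      have hc : (0:ℝ) ≤ if c = v then 1 else 0 := by positivity
      simp only [hp₀]
      linarith
    · simp only [hp₀]
      rw [hsumδ]; linarith
  -- edge direction vectors
  have hedge : ∀ e : G.edgeSet,
      ((fun e' => if e' = e then (1:ℝ) else 0, 0) : (G.edgeSet → ℝ) × (V → ℝ)) ∈ vectorSpan ℝ S := by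
    intro e
    have hpe : ((fun e' => (1:ℝ) + if e' = e then 1 else 0, p₀.2) :
        (G.edgeSet → ℝ) × (V → ℝ)) ∈ S := by
      refine ⟨⟨fun e' => by positivity, fun u => by by_cases h : u = v <;> simp [hp₀, h],
        fun a c _ => ?_, ?_⟩, by simp [hp₀]⟩
      · have ha : (0:ℝ) ≤ if a = v then 1 else 0 := by positivity
        have hc : (0:ℝ) ≤ if c = v then 1 else 0 := by positivity
        have hi : (0:ℝ) ≤ if (⟨s(a, c), by assumption⟩ : G.edgeSet) = e then 1 else 0 := by
          positivity
        simp only [hp₀]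
        linarith
      · simp only [hp₀]
        rw [hsumδ]; linarith
    have := vsub_mem_vectorSpan ℝ hpe hp₀S
    convert this using 1
    refine Prod.ext ?_ ?_
    · funext e'; simp [hp₀]
    · simp [hp₀]
  -- vertex direction vectors, for u ≠ v
  have hvert : ∀ u : V, u ≠ v →
      ((0, fun w => if w = u then (1:ℝ) else 0) : (G.edgeSet → ℝ) × (V → ℝ)) ∈ vectorSpan ℝ S := by
    intro u hu
    have hpu : ((p₀.1, fun w => (if w = v then (1:ℝ) else 0) + if w = u then 1 else 0) :
        (G.edgeSet → ℝ) × (V → ℝ)) ∈ S := by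
      refine ⟨⟨fun e => by norm_num [hp₀], fun w => ?_, fun a c _ => ?_, ?_⟩, by simp [hu.symm]⟩
      · constructor
        · positivity
        · by_cases h1 : w = v
          · simp [h1, hu.symm]
          · by_cases h2 : w = u <;> simp [h1, h2, hu]
      · have ha1 : (0:ℝ) ≤ if a = v then 1 else 0 := by positivity
        have ha2 : (0:ℝ) ≤ if a = u then 1 else 0 := by positivity
        have hc1 : (0:ℝ) ≤ if c = v then 1 else 0 := by positivity
        have hc2 : (0:ℝ) ≤ if c = u then 1 else 0 := by positivity
        simp only [hp₀]
        linarith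
      · rw [Finset.sum_add_distrib, hsumδ]
        have : ∑ w : V, (if w = u then (1:ℝ) else 0) = 1 := by simp
        rw [this]; linarith
    have := vsub_mem_vectorSpan ℝ hpu hp₀S
    convert this using 1
    refine Prod.ext ?_ ?_
    · funext e; simp [hp₀]
    · funext w; simp [hp₀]
  -- the direction equals `ker f`
  have hdir : (affineSpan ℝ S).direction = LinearMap.ker f := by
    rw [direction_affineSpan]
    apply le_antisymm
    · rw [vectorSpan_def]
      rw [Submodule.span_le]
      rw [Set.vsub_subset_iff]
      rintro p hp q hq
      simp only [SetLike.mem_coe, LinearMap.mem_ker]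
      have : f (p -ᵥ q) = p.2 v - q.2 v := rfl
      rw [this, hp.2, hq.2, sub_self]
    · intro w hw
      have hwv : w.2 v = 0 := hw
      have hdecomp : w = (∑ e : G.edgeSet, w.1 e •
            ((fun e' => if e' = e then (1:ℝ) else 0, 0) : (G.edgeSet → ℝ) × (V → ℝ))) +
          ∑ u : V, w.2 u •
            ((0, fun x => if x = u then (1:ℝ) else 0) : (G.edgeSet → ℝ) × (V → ℝ)) := by
        refine Prod.ext ?_ ?_
        · funext e
          simp [Finset.sum_apply, Prod.fst_sum, mul_ite]
        · funext u
          simp [Finset.sum_apply, Prod.snd_sum, mul_ite]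
      rw [hdecomp]
      refine Submodule.add_mem _ (Submodule.sum_mem _ fun e _ => Submodule.smul_mem _ _ (hedge e))
        (Submodule.sum_mem _ fun u _ => ?_)
      by_cases hu : u = v
      · subst hu
        rw [hwv, zero_smul]
        exact Submodule.zero_mem _
      · exact Submodule.smul_mem _ _ (hvert u hu)
  rw [hdir]
  -- compute the finrank of the kernel
  have hsurj : LinearMap.range f = ⊤ := by
    rw [LinearMap.range_eq_top]
    intro r
    exact ⟨(0, fun w => if w = v then r else 0), by simp [f]⟩
  have := LinearMap.finrank_range_add_finrank_ker f
  rw [hsurj] at this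
  rw [finrank_top] at this
  rw [Module.finrank_self] at this
  have htot : Module.finrank ℝ ((G.edgeSet → ℝ) × (V → ℝ)) =
      Fintype.card G.edgeSet + Fintype.card V := by
    rw [Module.finrank_prod, Module.finrank_fintype_fun_eq_card, Module.finrank_fintype_fun_eq_card]
  rw [htot] at this
  have hn : 1 ≤ Fintype.card V := Fintype.card_pos_iff.mpr ⟨v⟩
  omega
end

section
/- For integer solutions, the aggregated inequalities imply the disaggregated ones: if x : E² → {0,1} and y : V → {0,1} satisfy, for every pair {u,v} ∈ E² \ E, the aggregated inequality (Σ_{i ∈ N(u)∩N(v)} (1 − y_i)) / |N(u)∩N(v)| − y_u − y_v ≤ x_{uv}, then for every {u,v} ∈ E² \ E and every common neighbor i ∈ N(u) ∩ N(v) the disaggregated inequality 1 − y_u − y_v − y_i ≤ x_{uv} holds. -/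
open Finset

/-- For integer solutions, the aggregated inequalities imply the disaggregated ones:
if binary `x` (on `E²`) and binary `y` satisfy, for every non-adjacent pair `{u,v}` with a
common neighbor (i.e., every pair in `E² \ E`), the aggregated inequality
`(∑_{i ∈ N(u)∩N(v)} (1 - y_i)) / |N(u)∩N(v)| - y_u - y_v ≤ x_{uv}`, then for every such pair
and every common neighbor `i` the disaggregated inequality `1 - y_u - y_v - y_i ≤ x_{uv}`
holds. -/
theorem dcndp2_aggregated_implies_disaggregated {V : Type*} [Fintype V] [DecidableEq V]
    (G : SimpleGraph V) [DecidableRel G.Adj] (x : Sym2 V → ℝ) (y : V → ℝ)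
    (hy : ∀ v, y v = 0 ∨ y v = 1)
    (hx : ∀ u v : V, u ≠ v →
      (G.Adj u v ∨ (G.neighborFinset u ∩ G.neighborFinset v).Nonempty) →
      x s(u, v) = 0 ∨ x s(u, v) = 1)
    (hagg : ∀ u v : V, u ≠ v → ¬ G.Adj u v →
      (G.neighborFinset u ∩ G.neighborFinset v).Nonempty →
      (∑ i ∈ G.neighborFinset u ∩ G.neighborFinset v, (1 - y i)) /
          ((G.neighborFinset u ∩ G.neighborFinset v).card : ℝ) - y u - y v ≤ x s(u, v)) :
    ∀ u v i : V, u ≠ v → ¬ G.Adj u v → G.Adj u i → G.Adj v i →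
      1 - y u - y v - y i ≤ x s(u, v) := by
  intro u v i huv hnadj hui hvi
  have hi : i ∈ G.neighborFinset u ∩ G.neighborFinset v := by
    exact Finset.mem_inter.mpr ⟨by simpa using hui, by simpa using hvi⟩
  have hy0 : ∀ w, (0:ℝ) ≤ y w := fun w => by rcases hy w with h | h <;> simp [h]
  have hne : (G.neighborFinset u ∩ G.neighborFinset v).Nonempty := ⟨i, hi⟩
  have hx' := hx u v huv (Or.inr hne)
  have hx0 : (0 : ℝ) ≤ x s(u, v) := by rcases hx' with h | h <;> simp [h]
  rcases hy u with hu | hu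
  · rcases hy v with hv | hv
    · rcases hy i with hiy | hiy
      · -- all zero: show x = 1
        have hsum : (0 : ℝ) < ∑ j ∈ G.neighborFinset u ∩ G.neighborFinset v, (1 - y j) := by
          apply Finset.sum_pos'
          · intro j hj
            rcases hy j with h | h <;> simp [h]
          · exact ⟨i, hi, by simp [hiy]⟩
        have hcard : (0 : ℝ) < ((G.neighborFinset u ∩ G.neighborFinset v).card : ℝ) := by
          exact_mod_cast Finset.card_pos.mpr hne
        have := hagg u v huv hnadj hne
        have hxpos : (0 : ℝ) < x s(u, v) := by
          have : (0 : ℝ) < (∑ j ∈ G.neighborFinset u ∩ G.neighborFinset v, (1 - y j)) /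
              ((G.neighborFinset u ∩ G.neighborFinset v).card : ℝ) := div_pos hsum hcard
          nlinarith [hagg u v huv hnadj hne]
        rcases hx' with h | h
        · linarith [hxpos, h.ge, h.le]
        · rw [h]; linarith [hu, hv, hiy]
      · linarith [hy0 i]
    · linarith [hy0 i]
  · linarith [hy0 i, hy0 v]
end

section
/- In the 2-DCNDP MIP formulation the disaggregated constraints can be replaced by the aggregated constraints: for x : E² → {0,1} and y : V → {0,1}, (x, y) satisfies all disaggregated inequalities (1 − y_u − y_v − y_i ≤ x_{uv} for every {u,v} ∈ E² \ E and every common neighbor i) if and only if (x, y) satisfies all aggregated inequalities ((Σ_{i ∈ N(u)∩N(v)} (1 − y_i)) / |N(u)∩N(v)| − y_u − y_v ≤ x_{uv} for every {u,v} ∈ E² \ E); consequently, the two formulations have the same set of integer feasible solutions. -/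
open Finset

/-- In the 2-DCNDP MIP formulation the disaggregated constraints can be replaced by the
aggregated constraints: for binary `x` (on `E²`) and binary `y`, `(x, y)` satisfies all
disaggregated inequalities if and only if it satisfies all aggregated inequalities; hence
the two formulations have the same set of integer feasible solutions. -/
theorem dcndp2_disaggregated_iff_aggregated {V : Type*} [Fintype V] [DecidableEq V]
    (G : SimpleGraph V) [DecidableRel G.Adj] (x : Sym2 V → ℝ) (y : V → ℝ)
    (hy : ∀ v, y v = 0 ∨ y v = 1)
    (hx : ∀ u v : V, u ≠ v →
      (G.Adj u v ∨ (G.neighborFinset u ∩ G.neighborFinset v).Nonempty) →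
      x s(u, v) = 0 ∨ x s(u, v) = 1) :
    (∀ u v i : V, u ≠ v → ¬ G.Adj u v → G.Adj u i → G.Adj v i →
        1 - y u - y v - y i ≤ x s(u, v)) ↔
      (∀ u v : V, u ≠ v → ¬ G.Adj u v →
        (G.neighborFinset u ∩ G.neighborFinset v).Nonempty →
        (∑ i ∈ G.neighborFinset u ∩ G.neighborFinset v, (1 - y i)) /
            ((G.neighborFinset u ∩ G.neighborFinset v).card : ℝ) - y u - y v ≤ x s(u, v)) := by
  constructor
  · intro h u v huv hadj hne
    set s := G.neighborFinset u ∩ G.neighborFinset v with hs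
    have hcard : (0:ℝ) < s.card := by exact_mod_cast card_pos.mpr hne
    have hsum : ∑ i ∈ s, (1 - y i) ≤ s.card * (x s(u,v) + y u + y v) := by
      calc ∑ i ∈ s, (1 - y i) ≤ ∑ _i ∈ s, (x s(u,v) + y u + y v) := by
            apply Finset.sum_le_sum
            intro i hi
            rw [hs, mem_inter, SimpleGraph.mem_neighborFinset,
              SimpleGraph.mem_neighborFinset] at hi
            linarith [h u v i huv hadj hi.1 hi.2]
        _ = s.card * (x s(u,v) + y u + y v) := by
            rw [Finset.sum_const, nsmul_eq_mul]
    have hdiv : (∑ i ∈ s, (1 - y i)) / (s.card : ℝ) ≤ x s(u,v) + y u + y v := by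
      rw [div_le_iff₀ hcard]
      linarith
    linarith
  · intro h u v i huv hadj hui hvi
    have hi : i ∈ G.neighborFinset u ∩ G.neighborFinset v := by
      rw [mem_inter, SimpleGraph.mem_neighborFinset, SimpleGraph.mem_neighborFinset]
      exact ⟨hui, hvi⟩
    have hne : (G.neighborFinset u ∩ G.neighborFinset v).Nonempty := ⟨i, hi⟩
    have hagg := h u v huv hadj hne
    have hx' := hx u v huv (Or.inr hne)
    have hxnn : 0 ≤ x s(u, v) := by rcases hx' with h0 | h0 <;> rw [h0] <;> norm_num
    rcases hy u with hu | hu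
    · rcases hy v with hv | hv
      · rcases hy i with hyi | hyi
        · rcases hx' with hx0 | hx1
          · exfalso
            set s := G.neighborFinset u ∩ G.neighborFinset v with hs
            have hcard : (0:ℝ) < s.card := by exact_mod_cast card_pos.mpr hne
            have hsingle : 1 - y i ≤ ∑ j ∈ s, (1 - y j) :=
              Finset.single_le_sum (f := fun j => 1 - y j)
                (fun j _ => by rcases hy j with h0 | h0 <;> simp [h0]) hi
            have hsum1 : (1:ℝ) ≤ ∑ j ∈ s, (1 - y j) := by rw [hyi] at hsingle; linarith
            have hle0 : (∑ j ∈ s, (1 - y j)) / (s.card : ℝ) ≤ 0 := by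
              rw [hx0, hu, hv] at hagg; linarith
            rw [div_le_iff₀ hcard] at hle0
            linarith
          · rw [hx1, hu, hv, hyi]; norm_num
        · rw [hu, hv, hyi]; linarith
      · rcases hy i with hyi | hyi <;> rw [hu, hv, hyi] <;> linarith
    · rw [hu]; rcases hy v with hv | hv <;> rcases hy i with hyi | hyi <;>
        rw [hv, hyi] <;> linarith
end

section
/- If b ≥ 1, the following m + n + 1 points all belong to the 1-DCNDP polytope P₁ and form an affinely independent family: (i) the point (𝟙, 0) with x_e = 1 for all e ∈ E and y = 0; (ii) for each edge f = {u,v} ∈ E, the point (𝟙 − e_f, e_u), where a fixed endpoint u of f has y_u = 1, all other y-coordinates are 0, x_f = 0, and x_e = 1 for e ≠ f; and (iii) for each vertex v ∈ V, the point (𝟙, e_v) with x_e = 1 for all e and y_v = 1, y_w = 0 for w ≠ v. -/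
open Finset

/-- If `b ≥ 1`, the `m + n + 1` points `(𝟙, 0)`; `(𝟙 - e_f, e_{p f})` for each edge `f`,
where `p f` is a fixed endpoint of `f`; and `(𝟙, e_v)` for each vertex `v`, all belong to
the 1-DCNDP polytope `P₁` and form an affinely independent family. -/
theorem dcndpP1_affineIndependent_points {V : Type*} [Fintype V] [DecidableEq V]
    (G : SimpleGraph V) [DecidableRel G.Adj] (b : ℝ) (hb : 1 ≤ b)
    (p : G.edgeSet → V) (hp : ∀ f : G.edgeSet, p f ∈ (f : Sym2 V)) :
    let pts : Option (G.edgeSet ⊕ V) → (G.edgeSet → ℝ) × (V → ℝ) := fun i =>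
      match i with
      | none => (fun _ => 1, fun _ => 0)
      | some (Sum.inl f) =>
          (fun e => if e = f then 0 else 1, fun w => if w = p f then 1 else 0)
      | some (Sum.inr v) => (fun _ => 1, fun w => if w = v then 1 else 0)
    (∀ i, pts i ∈ dcndpP1 G b) ∧ AffineIndependent ℝ pts := by
  intro pts
  constructor
  · rintro (_ | f | v)
    · refine ⟨fun e => zero_le_one, fun v => ⟨le_rfl, zero_le_one⟩, fun u v h => by norm_num, ?_⟩
      simp only [pts, Finset.sum_const_zero]
      linarith
    · refine ⟨fun e => by dsimp only [pts]; split <;> norm_num,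
        fun v => by dsimp only [pts]; split <;> norm_num,
        fun u v h => ?_, ?_⟩
      · dsimp only [pts]
        by_cases he : (⟨s(u, v), h⟩ : G.edgeSet) = f
        · subst he
          have hm : p (⟨s(u, v), h⟩ : G.edgeSet) = u ∨ p (⟨s(u, v), h⟩ : G.edgeSet) = v := by
            simpa [Sym2.mem_iff] using hp ⟨s(u, v), h⟩
          rcases hm with hm | hm <;> simp [hm, h.ne, h.ne']
        · rw [if_neg he]
          have h1 : (0:ℝ) ≤ if u = p f then 1 else 0 := by split <;> norm_num
          have h2 : (0:ℝ) ≤ if v = p f then 1 else 0 := by split <;> norm_num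
          linarith
      · dsimp only [pts]
        rw [Finset.sum_ite_eq' Finset.univ (p f) (fun _ => (1:ℝ))]
        simpa using hb
    · refine ⟨fun e => zero_le_one, fun w => by dsimp only [pts]; split <;> norm_num,
        fun u w h => ?_, ?_⟩
      · dsimp only [pts]
        have h1 : (0:ℝ) ≤ if u = v then 1 else 0 := by split <;> norm_num
        have h2 : (0:ℝ) ≤ if w = v then 1 else 0 := by split <;> norm_num
        linarith
      · dsimp only [pts]
        rw [Finset.sum_ite_eq' Finset.univ v (fun _ => (1:ℝ))]
        simpa using hb
  · rw [affineIndependent_iff]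
    intro s w hw hsum
    have h1 : ∀ f : G.edgeSet,
        (if some (Sum.inl f) ∈ s then w (some (Sum.inl f)) else 0) = 0 := by
      intro f
      have hx : (∑ e ∈ s, w e • pts e).1 f = 0 := by rw [hsum]; rfl
      rw [Prod.fst_sum, Finset.sum_apply] at hx
      have : ∀ i ∈ s, (w i • pts i).1 f =
          w i - (if i = some (Sum.inl f) then w i else 0) := by
        rintro (_ | g | v) _
        · simp [pts]
        · dsimp only [pts, Pi.smul_apply, smul_eq_mul]
          by_cases hg : g = f
          · subst hg; simp
          · have : (some (Sum.inl g) : Option (G.edgeSet ⊕ V)) ≠ some (Sum.inl f) := by simp [hg]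
            simp [Ne.symm hg, this]
        · simp [pts]
      rw [Finset.sum_congr rfl this, Finset.sum_sub_distrib, hw,
        Finset.sum_ite_eq' s (some (Sum.inl f)) w] at hx
      linarith
    have h1' : ∀ f : G.edgeSet, some (Sum.inl f) ∈ s → w (some (Sum.inl f)) = 0 := by
      intro f hf; have := h1 f; rwa [if_pos hf] at this
    have h2' : ∀ v : V, some (Sum.inr v) ∈ s → w (some (Sum.inr v)) = 0 := by
      intro v hv
      have hy : (∑ e ∈ s, w e • pts e).2 v = 0 := by rw [hsum]; rfl
      rw [Prod.snd_sum, Finset.sum_apply] at hy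
      have : ∀ i ∈ s, (w i • pts i).2 v =
          (if i = some (Sum.inr v) then w i else 0) := by
        rintro (_ | g | u) hi
        · simp [pts]
        · dsimp only [pts, Pi.smul_apply, smul_eq_mul]
          rw [h1' g hi]
          simp
        · dsimp only [pts, Pi.smul_apply, smul_eq_mul]
          by_cases hu : u = v
          · subst hu; simp
          · have : (some (Sum.inr u) : Option (G.edgeSet ⊕ V)) ≠ some (Sum.inr v) := by simp [hu]
            simp [Ne.symm hu, this]
      rw [Finset.sum_congr rfl this, Finset.sum_ite_eq' s (some (Sum.inr v)) w,
        if_pos hv] at hy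
      exact hy
    have h0 : ∀ i ∈ s, w i = (if i = (none : Option (G.edgeSet ⊕ V)) then w i else 0) := by
      rintro (_ | g | u) hi
      · simp
      · simp [h1' g hi]
      · simp [h2' u hi]
    have hnone : ∀ hn : (none : Option (G.edgeSet ⊕ V)) ∈ s, w none = 0 := by
      intro hn
      have := hw
      rw [Finset.sum_congr rfl h0, Finset.sum_ite_eq' s none w, if_pos hn] at this
      exact this
    rintro (_ | g | u) hi
    · exact hnone hi
    · exact h1' g hi
    · exact h2' u hi
end

section
/- Fix an edge {u,v} ∈ E and assume b ≥ 1. The following m + n points all belong to the 1-DCNDP polytope P₁, all satisfy x_{uv} + y_u + y_v = 1, and form an affinely independent family: (i) the three points with x_e = 1 for all e ≠ {u,v}, y_w = 0 for all w ∉ {u,v}, and (y_u, y_v, x_{uv}) equal to (0,0,1), (1,0,0), and (0,1,0) respectively; (ii) for each edge f ∈ E with f ≠ {u,v}, the point (𝟙 − e_f, e_{p(f)}), where p(f) is a chosen endpoint of f with p(f) ∉ {u,v}; and (iii) for each vertex w ∈ V with w ∉ {u,v}, the point (𝟙, e_w). -/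
open Finset

/-- Auxiliary membership lemma: a point whose `x`-coordinates are `0`/`1` and whose
`y`-coordinate is the indicator of a vertex `c` covering every deleted edge lies in `P₁`. -/
lemma dcndpP1_mem_aux {V : Type*} [Fintype V] [DecidableEq V] (G : SimpleGraph V)
    [DecidableRel G.Adj] {b : ℝ} (hb : 1 ≤ b) (x : G.edgeSet → ℝ) (c : V)
    (hx01 : ∀ e, x e = 0 ∨ x e = 1)
    (hcov : ∀ e : G.edgeSet, x e = 0 → c ∈ (e : Sym2 V)) :
    (x, fun z => if z = c then (1:ℝ) else 0) ∈ dcndpP1 G b := by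
  refine ⟨fun e => ?_, fun z => ?_, fun a b' hab => ?_, ?_⟩
  · rcases hx01 e with h | h <;> simp [h]
  · show 0 ≤ (if z = c then (1:ℝ) else 0) ∧ (if z = c then (1:ℝ) else 0) ≤ 1
    split <;> norm_num
  · show 1 - (if a = c then (1:ℝ) else 0) - (if b' = c then (1:ℝ) else 0) ≤ x ⟨s(a, b'), hab⟩
    rcases hx01 ⟨s(a, b'), hab⟩ with hx | hx
    · rw [hx]
      have hc := hcov _ hx
      simp only [Sym2.mem_iff] at hc
      rcases hc with rfl | rfl
      · rw [if_pos rfl]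
        split <;> norm_num
      · rw [if_pos rfl]
        split <;> norm_num
    · rw [hx]
      have h1 : (0:ℝ) ≤ (if a = c then (1:ℝ) else 0) := by split <;> norm_num
      have h2 : (0:ℝ) ≤ (if b' = c then (1:ℝ) else 0) := by split <;> norm_num
      linarith
  · show (∑ z, if z = c then (1:ℝ) else 0) ≤ b
    have : (∑ z, if z = c then (1:ℝ) else 0) = 1 := by simp
    rw [this]; exact hb

/-- Fix an edge `{u,v}` and assume `b ≥ 1`. The `m + n` points described in the paper's
Table 9 all belong to `P₁`, all satisfy `x_{uv} + y_u + y_v = 1`, and form an affinely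
independent family. -/
theorem dcndpP1_cover_face_affineIndependent_points {V : Type*} [Fintype V] [DecidableEq V]
    (G : SimpleGraph V) [DecidableRel G.Adj] (b : ℝ) (hb : 1 ≤ b) (u v : V) (h : G.Adj u v)
    (p : {f : G.edgeSet // f ≠ ⟨s(u, v), h⟩} → V)
    (hp : ∀ f : {f : G.edgeSet // f ≠ ⟨s(u, v), h⟩},
      p f ∈ (f.1 : Sym2 V) ∧ p f ≠ u ∧ p f ≠ v) :
    let e₀ : G.edgeSet := ⟨s(u, v), h⟩
    let pts : Fin 3 ⊕ {f : G.edgeSet // f ≠ e₀} ⊕ {w : V // w ≠ u ∧ w ≠ v} →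
        (G.edgeSet → ℝ) × (V → ℝ) := fun i =>
      match i with
      | Sum.inl 0 => (fun _ => 1, fun _ => 0)
      | Sum.inl 1 => (fun e => if e = e₀ then 0 else 1, fun w => if w = u then 1 else 0)
      | Sum.inl 2 => (fun e => if e = e₀ then 0 else 1, fun w => if w = v then 1 else 0)
      | Sum.inr (Sum.inl f) =>
          (fun e => if e = f.1 then 0 else 1, fun w => if w = p f then 1 else 0)
      | Sum.inr (Sum.inr w) => (fun _ => 1, fun z => if z = (w : V) then 1 else 0)
    (∀ i, pts i ∈ dcndpP1 G b) ∧
      (∀ i, (pts i).1 e₀ + (pts i).2 u + (pts i).2 v = 1) ∧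
      AffineIndependent ℝ pts := by
  intro e₀ pts
  classical
  have h0 : pts (Sum.inl 0) = (fun _ => 1, fun _ => 0) := rfl
  have h1 : pts (Sum.inl 1) =
      (fun e => if e = e₀ then 0 else 1, fun w => if w = u then 1 else 0) := rfl
  have h2 : pts (Sum.inl 2) =
      (fun e => if e = e₀ then 0 else 1, fun w => if w = v then 1 else 0) := rfl
  have hfe : ∀ f, pts (Sum.inr (Sum.inl f)) =
      (fun e => if e = f.1 then 0 else 1, fun w => if w = p f then 1 else 0) := fun _ => rfl
  have hwe : ∀ w, pts (Sum.inr (Sum.inr w)) =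
      (fun _ => 1, fun z => if z = (w : V) then 1 else 0) := fun _ => rfl
  refine ⟨?_, ?_, ?_⟩
  · -- membership
    rintro (i | f | w)
    · fin_cases i
      · refine ⟨fun e => ?_, fun z => ?_, fun a b' hab => ?_, ?_⟩
        · show (0:ℝ) ≤ 1; norm_num
        · show (0:ℝ) ≤ 0 ∧ (0:ℝ) ≤ 1; norm_num
        · show 1 - 0 - 0 ≤ (1:ℝ); norm_num
        · show (∑ _z : V, (0:ℝ)) ≤ b
          simp; linarith
      · exact dcndpP1_mem_aux G hb (fun e => if e = e₀ then 0 else 1) u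
          (fun e => by by_cases hc : e = e₀ <;> simp [hc])
          (fun e he => by
            by_cases hc : e = e₀
            · rw [hc]; exact Sym2.mem_mk_left u v
            · simp [hc] at he)
      · exact dcndpP1_mem_aux G hb (fun e => if e = e₀ then 0 else 1) v
          (fun e => by by_cases hc : e = e₀ <;> simp [hc])
          (fun e he => by
            by_cases hc : e = e₀
            · rw [hc]; exact Sym2.mem_mk_right u v
            · simp [hc] at he)
    · exact dcndpP1_mem_aux G hb (fun e => if e = (f : G.edgeSet) then 0 else 1) (p f)
        (fun e => by by_cases hc : e = (f : G.edgeSet) <;> simp [hc])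
        (fun e he => by
          by_cases hc : e = (f : G.edgeSet)
          · rw [hc]; exact (hp f).1
          · simp [hc] at he)
    · exact dcndpP1_mem_aux G hb (fun _ => 1) (w : V)
        (fun e => Or.inr rfl) (fun e he => by norm_num at he)
  · -- face equation
    rintro (i | f | w)
    · fin_cases i
      · show (1:ℝ) + 0 + 0 = 1; norm_num
      · show (if e₀ = e₀ then (0:ℝ) else 1) + (if u = u then (1:ℝ) else 0)
            + (if v = u then (1:ℝ) else 0) = 1
        rw [if_pos rfl, if_pos rfl, if_neg h.ne']; norm_num
      · show (if e₀ = e₀ then (0:ℝ) else 1) + (if u = v then (1:ℝ) else 0)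
            + (if v = v then (1:ℝ) else 0) = 1
        rw [if_pos rfl, if_neg h.ne, if_pos rfl]; norm_num
    · show (if e₀ = (f : G.edgeSet) then (0:ℝ) else 1) + (if u = p f then (1:ℝ) else 0)
          + (if v = p f then (1:ℝ) else 0) = 1
      rw [if_neg (Ne.symm f.2), if_neg (Ne.symm (hp f).2.1), if_neg (Ne.symm (hp f).2.2)]
      norm_num
    · show (1:ℝ) + (if u = (w : V) then (1:ℝ) else 0) + (if v = (w : V) then (1:ℝ) else 0) = 1
      rw [if_neg (Ne.symm w.2.1), if_neg (Ne.symm w.2.2)]; norm_num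
  · -- affine independence
    rw [affineIndependent_iff]
    intro s w₀ hw0 hsum i hi
    set W : (Fin 3 ⊕ {f : G.edgeSet // f ≠ e₀} ⊕ {w : V // w ≠ u ∧ w ≠ v}) → ℝ :=
      fun i => if i ∈ s then w₀ i else 0 with hWdef
    have hWs : ∑ j, W j = 0 := by
      rw [← hw0]
      simp [hWdef, Finset.sum_ite_mem]
    have hWsum : ∑ j, W j • pts j = 0 := by
      rw [← hsum]
      simp [hWdef, ite_smul, zero_smul, Finset.sum_ite_mem]
    suffices hall : ∀ j, W j = 0 by
      have := hall i
      rw [hWdef] at this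
      simpa [hi] using this
    have hx : ∀ e : G.edgeSet, ∑ j, W j * (pts j).1 e = 0 := by
      intro e
      have := congrFun (congrArg Prod.fst hWsum) e
      simpa [Prod.fst_sum, Finset.sum_apply, Pi.smul_apply, smul_eq_mul] using this
    have hy : ∀ z : V, ∑ j, W j * (pts j).2 z = 0 := by
      intro z
      have := congrFun (congrArg Prod.snd hWsum) z
      simpa [Prod.snd_sum, Finset.sum_apply, Pi.smul_apply, smul_eq_mul] using this
    have etotal := hWs
    rw [Fintype.sum_sum_type, Fintype.sum_sum_type, Fin.sum_univ_three] at etotal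
    -- expansion of the x-sum
    have expandx : ∀ e : G.edgeSet, ∑ j, W j * (pts j).1 e =
        W (Sum.inl 0) + W (Sum.inl 1) * (if e = e₀ then 0 else 1)
          + W (Sum.inl 2) * (if e = e₀ then 0 else 1)
          + (∑ f : {f : G.edgeSet // f ≠ e₀},
              W (Sum.inr (Sum.inl f)) * (if e = (f : G.edgeSet) then 0 else 1))
          + ∑ t : {w : V // w ≠ u ∧ w ≠ v}, W (Sum.inr (Sum.inr t)) := by
      intro e
      rw [Fintype.sum_sum_type, Fintype.sum_sum_type, Fin.sum_univ_three, h0, h1, h2]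
      simp only [hfe, hwe]
      ring
    have expandy : ∀ z : V, ∑ j, W j * (pts j).2 z =
        W (Sum.inl 1) * (if z = u then 1 else 0) + W (Sum.inl 2) * (if z = v then 1 else 0)
          + (∑ f : {f : G.edgeSet // f ≠ e₀},
              W (Sum.inr (Sum.inl f)) * (if z = p f then 1 else 0))
          + ∑ t : {w : V // w ≠ u ∧ w ≠ v},
              W (Sum.inr (Sum.inr t)) * (if z = (t : V) then 1 else 0) := by
      intro z
      rw [Fintype.sum_sum_type, Fintype.sum_sum_type, Fin.sum_univ_three, h0, h1, h2]
      simp only [hfe, hwe]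
      ring
    -- step 1: edge-indexed weights vanish
    have hedge : ∀ g : {f : G.edgeSet // f ≠ e₀}, W (Sum.inr (Sum.inl g)) = 0 := by
      intro g
      have e1 := hx g.1
      rw [expandx g.1] at e1
      have hsplit : (∑ f : {f : G.edgeSet // f ≠ e₀},
          W (Sum.inr (Sum.inl f)) * (if (g : G.edgeSet) = (f : G.edgeSet) then 0 else 1))
          = (∑ f : {f : G.edgeSet // f ≠ e₀}, W (Sum.inr (Sum.inl f)))
            - W (Sum.inr (Sum.inl g)) := by
        have hif : ∀ f : {f : G.edgeSet // f ≠ e₀},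
            (if (g : G.edgeSet) = (f : G.edgeSet) then (0:ℝ) else 1)
              = 1 - (if f = g then 1 else 0) := by
          intro f
          by_cases hfg : f = g
          · subst hfg; simp
          · rw [if_neg (fun hc => hfg (Subtype.ext hc.symm)), if_neg hfg]; norm_num
        simp only [hif, mul_sub, mul_one, Finset.sum_sub_distrib, mul_ite, mul_zero]
        simp
      rw [hsplit, if_neg g.2] at e1
      linarith
    -- step 2: weights at u and v
    have hWu : W (Sum.inl 1) = 0 := by
      have e1 := hy u
      rw [expandy u,
        Finset.sum_eq_zero (fun f (_ : f ∈ Finset.univ) => by rw [hedge f, zero_mul]),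
        Finset.sum_eq_zero
          (fun t (_ : t ∈ Finset.univ) => by rw [if_neg (Ne.symm t.2.1), mul_zero])] at e1
      simpa [h.ne] using e1
    have hWv : W (Sum.inl 2) = 0 := by
      have e1 := hy v
      rw [expandy v,
        Finset.sum_eq_zero (fun f (_ : f ∈ Finset.univ) => by rw [hedge f, zero_mul]),
        Finset.sum_eq_zero
          (fun t (_ : t ∈ Finset.univ) => by rw [if_neg (Ne.symm t.2.2), mul_zero])] at e1
      simpa [h.ne'] using e1
    -- step 3: vertex-indexed weights
    have hvert : ∀ t : {w : V // w ≠ u ∧ w ≠ v}, W (Sum.inr (Sum.inr t)) = 0 := by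
      intro t
      have e1 := hy t.1
      rw [expandy t.1,
        Finset.sum_eq_zero (fun f (_ : f ∈ Finset.univ) => by rw [hedge f, zero_mul])] at e1
      have hlast : (∑ t' : {w : V // w ≠ u ∧ w ≠ v},
          W (Sum.inr (Sum.inr t')) * (if (t : V) = (t' : V) then 1 else 0))
          = W (Sum.inr (Sum.inr t)) := by
        rw [Finset.sum_eq_single_of_mem t (Finset.mem_univ t)]
        · simp
        · intro t' _ hne
          rw [if_neg (fun hc => hne (Subtype.ext hc.symm)), mul_zero]
      rw [hlast, if_neg t.2.1, if_neg t.2.2, hWu, hWv] at e1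
      linarith
    -- step 4: the base point
    have hW0 : W (Sum.inl 0) = 0 := by
      rw [Finset.sum_eq_zero (fun f (_ : f ∈ Finset.univ) => hedge f),
        Finset.sum_eq_zero (fun t (_ : t ∈ Finset.univ) => hvert t), hWu, hWv] at etotal
      linarith
    rintro (j | f | t)
    · fin_cases j
      · exact hW0
      · exact hWu
      · exact hWv
    · exact hedge f
    · exact hvert t
end

section
/- Fix a vertex v ∈ V and assume b ≥ 1. The following m + n points all belong to the 1-DCNDP polytope P₁, all satisfy y_v = 0, and form an affinely independent family: (i) for each edge f ∈ E, the point (𝟙 − e_f, e_{p(f)}), where p(f) is a chosen endpoint of f with p(f) ≠ v; (ii) for each vertex w ∈ V with w ≠ v, the point (𝟙, e_w); and (iii) the point (𝟙, 0). -/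
open Finset

/-- Fix a vertex `v` and assume `b ≥ 1`. The `m + n` points `(𝟙 - e_f, e_{p f})` for each
edge `f` (with `p f` an endpoint of `f` different from `v`), `(𝟙, e_w)` for each vertex
`w ≠ v`, and `(𝟙, 0)`, all belong to `P₁`, all satisfy `y_v = 0`, and form an affinely
independent family. -/
theorem dcndpP1_y_nonneg_face_affineIndependent_points {V : Type*} [Fintype V] [DecidableEq V]
    (G : SimpleGraph V) [DecidableRel G.Adj] (b : ℝ) (hb : 1 ≤ b) (v : V)
    (p : G.edgeSet → V)
    (hp : ∀ f : G.edgeSet, p f ∈ (f : Sym2 V) ∧ p f ≠ v) :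
    let pts : Option (G.edgeSet ⊕ {w : V // w ≠ v}) → (G.edgeSet → ℝ) × (V → ℝ) := fun i =>
      match i with
      | none => (fun _ => 1, fun _ => 0)
      | some (Sum.inl f) =>
          (fun e => if e = f then 0 else 1, fun w => if w = p f then 1 else 0)
      | some (Sum.inr w) => (fun _ => 1, fun z => if z = (w : V) then 1 else 0)
    (∀ i, pts i ∈ dcndpP1 G b) ∧ (∀ i, (pts i).2 v = 0) ∧ AffineIndependent ℝ pts := by
  intro pts
  have hb0 : (0:ℝ) ≤ b := le_trans zero_le_one hb
  refine ⟨?_, ?_, ?_⟩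
  · rintro (_ | (f | w))
    · refine ⟨fun _ => zero_le_one, fun _ => ⟨le_refl 0, zero_le_one⟩,
        fun u u' h => by norm_num, by simpa [pts] using hb0⟩
    · refine ⟨fun e => by dsimp only [pts]; split_ifs <;> norm_num,
        fun z => by dsimp only [pts]; split_ifs <;> norm_num, ?_, ?_⟩
      · intro u u' h
        by_cases heq : (⟨s(u, u'), h⟩ : G.edgeSet) = f
        · have hco : (f : Sym2 V) = s(u, u') := by rw [← heq]
          have hmem : p f ∈ s(u, u') := hco ▸ (hp f).1
          rcases Sym2.mem_iff.mp hmem with h' | h'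
          · dsimp only [pts]
            rw [if_pos heq, if_pos h'.symm]
            split_ifs <;> norm_num
          · dsimp only [pts]
            rw [if_pos heq, if_pos h'.symm]
            split_ifs <;> norm_num
        · dsimp only [pts]
          rw [if_neg heq]
          split_ifs <;> norm_num
      · dsimp only [pts]
        rw [Finset.sum_ite_eq' Finset.univ (p f) (fun _ => (1:ℝ))]
        simpa using hb
    · refine ⟨fun e => zero_le_one,
        fun z => by dsimp only [pts]; split_ifs <;> norm_num, ?_, ?_⟩
      · intro u u' h
        dsimp only [pts]
        split_ifs <;> norm_num
      · dsimp only [pts]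
        rw [Finset.sum_ite_eq' Finset.univ (w : V) (fun _ => (1:ℝ))]
        simpa using hb
  · rintro (_ | (f | w))
    · rfl
    · dsimp only [pts]
      simp [Ne.symm (hp f).2]
    · dsimp only [pts]
      simp [Ne.symm w.2]
  · rw [affineIndependent_iff]
    intro s c hc hsum i hi
    -- reduce to s = univ by extending weights with 0
    have h1 : ∀ f : G.edgeSet, some (Sum.inl f) ∈ s → c (some (Sum.inl f)) = 0 := by
      intro f hf
      have h := congrFun (congrArg Prod.fst hsum) f
      have key : ∀ j ∈ s, c j * (pts j).1 f
          = c j - (if j = some (Sum.inl f) then c j else 0) := by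
        rintro (_ | (f' | w)) _ <;> dsimp only [pts]
        · simp
        · by_cases h' : f' = f
          · subst h'; simp
          · simp [h', Ne.symm h']
        · simp
      have hsum1 : ∑ j ∈ s, c j * (pts j).1 f = 0 := by
        simpa [Prod.fst_sum, Finset.sum_apply] using h
      rw [Finset.sum_congr rfl key, Finset.sum_sub_distrib, hc,
        Finset.sum_ite_eq' s (some (Sum.inl f)) c, if_pos hf] at hsum1
      linarith
    have h2 : ∀ w : {w : V // w ≠ v}, some (Sum.inr w) ∈ s →
        c (some (Sum.inr w)) = 0 := by
      intro w hw
      have h := congrFun (congrArg Prod.snd hsum) (w : V)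
      have key : ∀ j ∈ s, c j * (pts j).2 (w : V)
          = (if j = some (Sum.inr w) then c j else 0) := by
        rintro (_ | (f' | w')) hj <;> dsimp only [pts]
        · simp
        · simp [h1 f' hj]
        · by_cases h' : w' = w
          · subst h'; simp
          · have : (w : V) ≠ (w' : V) := fun hh => h' (Subtype.ext hh.symm)
            simp [h', this]
      have hsum2 : ∑ j ∈ s, c j * (pts j).2 (w : V) = 0 := by
        simpa [Prod.snd_sum, Finset.sum_apply] using h
      rw [Finset.sum_congr rfl key, Finset.sum_ite_eq' s (some (Sum.inr w)) c,
        if_pos hw] at hsum2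
      exact hsum2
    rcases i with _ | (f | w)
    · have hzero : ∑ j ∈ s, c j = c none := by
        have hcongr : ∑ j ∈ s, c j = ∑ j ∈ s, if j = none then c j else 0 := by
          refine Finset.sum_congr rfl ?_
          rintro (_ | (f' | w')) hj
          · simp
          · simp [h1 f' hj]
          · simp [h2 w' hj]
        rw [hcongr, Finset.sum_ite_eq' s (none : Option (G.edgeSet ⊕ {w : V // w ≠ v})) c,
          if_pos hi]
      rw [hc] at hzero; exact hzero.symm
    · exact h1 f hi
    · exact h2 w hi
end

section
/- Fix an edge {u,v} ∈ E and assume b ≥ 2. The following m + n points all belong to the 1-DCNDP polytope P₁, all satisfy x_{uv} = 0, and form an affinely independent family: (i) the three points with x_{uv} = 0, x_e = 1 for all e ∈ E with e ≠ {u,v}, y_w = 0 for all w ∉ {u,v}, and (y_u, y_v) equal to (0,1), (1,1), and (1,0) respectively; (ii) for each vertex w ∈ V with w ∉ {u,v}, the point with x_{uv} = 0, x_e = 1 for e ≠ {u,v}, and y = e_u + e_w; and (iii) for each edge f ∈ E with f ≠ {u,v}, the point with x_{uv} = x_f = 0, x_e = 1 for e ∉ {{u,v}, f}, and y = e_u +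 e_{p(f)}, where p(f) is a chosen endpoint of f with p(f) ∉ {u,v}. -/
open Finset

lemma mem_aux1 {V : Type*} [Fintype V] [DecidableEq V] (G : SimpleGraph V) [DecidableRel G.Adj]
    {b : ℝ} (hb : 2 ≤ b) (x : G.edgeSet → ℝ) (hx : ∀ e, x e = 0 ∨ x e = 1) (α : V)
    (hcov : ∀ e : G.edgeSet, x e = 0 → α ∈ (e : Sym2 V)) :
    (x, fun z => if z = α then (1:ℝ) else 0) ∈ dcndpP1 G b := by
  refine ⟨fun e => by rcases hx e with h | h <;> simp [h], ?_, ?_, ?_⟩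
  · intro z
    dsimp only
    split_ifs <;> norm_num
  · intro a c hac
    dsimp only
    rcases hx ⟨s(a,c), hac⟩ with h0 | h1
    · rw [h0]
      have hm := hcov _ h0
      simp only [Sym2.mem_iff] at hm
      rcases hm with rfl | rfl <;> split_ifs <;> simp_all
    · rw [h1]
      split_ifs <;> norm_num
  · simp only [Finset.sum_ite_eq', Finset.mem_univ, if_true]
    linarith

lemma mem_aux2 {V : Type*} [Fintype V] [DecidableEq V] (G : SimpleGraph V) [DecidableRel G.Adj]
    {b : ℝ} (hb : 2 ≤ b) (x : G.edgeSet → ℝ) (hx : ∀ e, x e = 0 ∨ x e = 1) (α β : V)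
    (hαβ : α ≠ β)
    (hcov : ∀ e : G.edgeSet, x e = 0 → α ∈ (e : Sym2 V) ∨ β ∈ (e : Sym2 V)) :
    (x, fun z => (if z = α then (1:ℝ) else 0) + (if z = β then 1 else 0)) ∈ dcndpP1 G b := by
  refine ⟨fun e => by rcases hx e with h | h <;> simp [h], ?_, ?_, ?_⟩
  · intro z
    refine ⟨by positivity, ?_⟩
    dsimp only
    rcases eq_or_ne z α with rfl | h1
    · simp [hαβ]
    · rcases eq_or_ne z β with rfl | h2
      · simp [h1]
      · simp [h1, h2]
  · intro a c hac
    dsimp only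
    rcases hx ⟨s(a,c), hac⟩ with h0 | h1
    · rw [h0]
      have hm := hcov _ h0
      simp only [Sym2.mem_iff] at hm
      rcases hm with (rfl | rfl) | (rfl | rfl) <;> split_ifs <;> simp_all
    · rw [h1]
      have n1 : (0:ℝ) ≤ (if a = α then (1:ℝ) else 0) + (if a = β then 1 else 0) := by positivity
      have n2 : (0:ℝ) ≤ (if c = α then (1:ℝ) else 0) + (if c = β then 1 else 0) := by positivity
      linarith
  · rw [Finset.sum_add_distrib]
    simp only [Finset.sum_ite_eq', Finset.mem_univ, if_true]
    linarith

lemma aux_affInd {ι W : Type*} [Fintype ι] [DecidableEq ι] [AddCommGroup W] [Module ℝ W]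
    (q : ι → W)
    (H : ∀ w : ι → ℝ, ∑ i, w i = 0 → ∑ i, w i • q i = 0 → ∀ i, w i = 0) :
    AffineIndependent ℝ q := by
  rw [affineIndependent_iff]
  intro s w hw0 hwq i hi
  have h1 : ∑ j, (if j ∈ s then w j else 0) = 0 := by
    rw [Finset.sum_ite_mem, Finset.univ_inter, hw0]
  have h2 : ∑ j, (if j ∈ s then w j else 0) • q j = 0 := by
    simp only [ite_smul, zero_smul, Finset.sum_ite_mem, Finset.univ_inter]
    exact hwq
  have := H _ h1 h2 i
  simpa [hi] using this


/-- Fix an edge `{u,v}` and assume `b ≥ 2`. The `m + n` points described in the paper's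
Table 3 all belong to `P₁`, all satisfy `x_{uv} = 0`, and form an affinely independent
family. -/
theorem dcndpP1_x_nonneg_face_affineIndependent_points {V : Type*} [Fintype V] [DecidableEq V]
    (G : SimpleGraph V) [DecidableRel G.Adj] (b : ℝ) (hb : 2 ≤ b) (u v : V) (h : G.Adj u v)
    (p : {f : G.edgeSet // f ≠ ⟨s(u, v), h⟩} → V)
    (hp : ∀ f : {f : G.edgeSet // f ≠ ⟨s(u, v), h⟩},
      p f ∈ (f.1 : Sym2 V) ∧ p f ≠ u ∧ p f ≠ v) :
    let e₀ : G.edgeSet := ⟨s(u, v), h⟩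
    let pts : Fin 3 ⊕ {w : V // w ≠ u ∧ w ≠ v} ⊕ {f : G.edgeSet // f ≠ e₀} →
        (G.edgeSet → ℝ) × (V → ℝ) := fun i =>
      match i with
      | Sum.inl 0 =>
          (fun e => if e = e₀ then 0 else 1, fun w => if w = v then 1 else 0)
      | Sum.inl 1 =>
          (fun e => if e = e₀ then 0 else 1,
           fun w => (if w = u then 1 else 0) + (if w = v then 1 else 0))
      | Sum.inl 2 =>
          (fun e => if e = e₀ then 0 else 1, fun w => if w = u then 1 else 0)
      | Sum.inr (Sum.inl w) =>
          (fun e => if e = e₀ then 0 else 1,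
           fun z => (if z = u then 1 else 0) + (if z = (w : V) then 1 else 0))
      | Sum.inr (Sum.inr f) =>
          (fun e => if e = e₀ ∨ e = f.1 then 0 else 1,
           fun z => (if z = u then 1 else 0) + (if z = p f then 1 else 0))
    (∀ i, pts i ∈ dcndpP1 G b) ∧ (∀ i, (pts i).1 e₀ = 0) ∧ AffineIndependent ℝ pts := by
  intro e₀ pts
  have huv : u ≠ v := h.ne
  have hx01 : ∀ x : G.edgeSet, ∀ e : G.edgeSet,
      (if e = x then (0:ℝ) else 1) = 0 ∨ (if e = x then (0:ℝ) else 1) = 1 := by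
    intro x e; split_ifs <;> simp
  refine ⟨?_, ?_, ?_⟩
  · rintro (j | w0 | f0)
    · fin_cases j
      · exact mem_aux1 G hb _ (hx01 e₀) v (fun e he => by
          have : e = e₀ := by by_contra hne; simp [hne] at he
          subst this; exact Sym2.mem_mk_right u v)
      · exact mem_aux2 G hb _ (hx01 e₀) u v huv (fun e he => by
          have : e = e₀ := by by_contra hne; simp [hne] at he
          subst this; exact Or.inl (Sym2.mem_mk_left u v))
      · exact mem_aux1 G hb _ (hx01 e₀) u (fun e he => by
          have : e = e₀ := by by_contra hne; simp [hne] at he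
          subst this; exact Sym2.mem_mk_left u v)
    · exact mem_aux2 G hb _ (hx01 e₀) u w0.1 (Ne.symm w0.2.1) (fun e he => by
        have : e = e₀ := by by_contra hne; simp [hne] at he
        subst this; exact Or.inl (Sym2.mem_mk_left u v))
    · refine mem_aux2 G hb _ ?_ u (p f0) (Ne.symm (hp f0).2.1) ?_
      · intro e; split_ifs <;> simp
      · intro e he
        by_cases h1 : e = e₀
        · subst h1; exact Or.inl (Sym2.mem_mk_left u v)
        · have h2 : e = f0.1 := by
            by_contra h2; simp [h1, h2] at he
          subst h2; exact Or.inr (hp f0).1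
  · rintro (j | w0 | f0)
    · fin_cases j <;> simp [pts]
    · simp [pts]
    · simp [pts]
  · apply aux_affInd
    intro w hsum hcomb
    -- coordinate equations
    have hxc : ∀ e : G.edgeSet, ∑ i, w i * (pts i).1 e = 0 := by
      intro e
      have := congrArg (fun q => q.1 e) hcomb
      simpa [Prod.fst_sum, Finset.sum_apply] using this
    have hyc : ∀ z : V, ∑ i, w i * (pts i).2 z = 0 := by
      intro z
      have := congrArg (fun q => q.2 z) hcomb
      simpa [Prod.snd_sum, Finset.sum_apply] using this
    -- step 1: edge weights vanish
    have hd : ∀ f0 : {f : G.edgeSet // f ≠ e₀}, w (Sum.inr (Sum.inr f0)) = 0 := by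
      intro f0
      have h1 := hxc f0.1
      have h2 : ∀ i, w i * (pts i).1 f0.1
          = w i - (if i = Sum.inr (Sum.inr f0) then w i else 0) := by
        rintro (j | w1 | g)
        · fin_cases j <;> simp [pts, f0.2]
        · simp [pts, f0.2]
        · rcases eq_or_ne g f0 with rfl | hg
          · simp [pts]
          · have hfg : f0.1 ≠ g.1 := fun hh => hg (Subtype.ext hh.symm)
            simp [pts, f0.2, hfg, hg]
      rw [Finset.sum_congr rfl (fun i _ => h2 i), Finset.sum_sub_distrib, hsum] at h1
      simpa using h1
    -- step 2: vertex weights vanish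
    have hc : ∀ w0 : {w : V // w ≠ u ∧ w ≠ v}, w (Sum.inr (Sum.inl w0)) = 0 := by
      intro w0
      have h1 := hyc w0.1
      have h2 : ∀ i, w i * (pts i).2 w0.1
          = (if i = Sum.inr (Sum.inl w0) then w i else 0) := by
        rintro (j | w1 | g)
        · fin_cases j <;> simp [pts, w0.2.1, w0.2.2]
        · rcases eq_or_ne w1 w0 with rfl | hg
          · simp [pts, w1.2.1]
          · have hfg : w0.1 ≠ w1.1 := fun hh => hg (Subtype.ext hh.symm)
            simp [pts, w0.2.1, hfg, hg]
        · simp [pts, hd g, w0.2.1]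
      rw [Finset.sum_congr rfl (fun i _ => h2 i), Finset.sum_ite_eq'] at h1
      simpa using h1
    -- step 3: y at v : a0 + a1 = 0
    have hv : w (Sum.inl 0) + w (Sum.inl 1) = 0 := by
      have h1 := hyc v
      have h2 : ∀ i, w i * (pts i).2 v
          = (if i = Sum.inl 0 then w i else 0) + (if i = Sum.inl 1 then w i else 0) := by
        rintro (j | w1 | g)
        · fin_cases j <;> simp [pts, huv.symm]
        · simp [pts, hc w1, Ne.symm w1.2.2]
        · simp [pts, hd g, Ne.symm (hp g).2.2]
      rw [Finset.sum_congr rfl (fun i _ => h2 i), Finset.sum_add_distrib,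
        Finset.sum_ite_eq', Finset.sum_ite_eq'] at h1
      simpa using h1
    -- step 4: y at u : a1 + a2 = 0
    have hu : w (Sum.inl 1) + w (Sum.inl 2) = 0 := by
      have h1 := hyc u
      have h2 : ∀ i, w i * (pts i).2 u
          = (if i = Sum.inl 1 then w i else 0) + (if i = Sum.inl 2 then w i else 0) := by
        rintro (j | w1 | g)
        · fin_cases j <;> simp [pts, huv]
        · simp [pts, hc w1]
        · simp [pts, hd g]
      rw [Finset.sum_congr rfl (fun i _ => h2 i), Finset.sum_add_distrib,
        Finset.sum_ite_eq', Finset.sum_ite_eq'] at h1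
      simpa using h1
    -- step 5: total sum gives a0 + a1 + a2 = 0
    have htot : w (Sum.inl 0) + w (Sum.inl 1) + w (Sum.inl 2) = 0 := by
      have h1 := hsum
      rw [Fintype.sum_sum_type, Fintype.sum_sum_type, Fin.sum_univ_three] at h1
      simp only [Finset.sum_congr rfl (fun i _ => hc i),
        Finset.sum_congr rfl (fun i _ => hd i), Finset.sum_const_zero] at h1
      linarith
    have ha0 : w (Sum.inl 0) = 0 := by linarith
    have ha1 : w (Sum.inl 1) = 0 := by linarith
    have ha2 : w (Sum.inl 2) = 0 := by linarith
    rintro (j | w1 | g)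
    · fin_cases j
      · exact ha0
      · exact ha1
      · exact ha2
    · exact hc w1
    · exact hd g
end
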